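/- arXiv:2505.17954 — 4 statements merged into one kernel-verified Lean document; each statement's English description precedes it below -/
import Mathlib

section
/- Let p < q be coprime positive integers and Γ = ⟨p,q⟩. Every 0-normalized Γ-semimodule Δ (i.e., Δ ⊆ ℕ with min Δ = 0 and Δ + Γ ⊆ Δ) admits a unique p-basis: a set {a_0, a_1, ..., a_{p-1}} ⊆ ℕ such that Δ = ⋃_{i=0}^{p-1} (a_i + pℕ) and a_i ≡ iq (mod p) for each i. -/
/-- Every 0-normalized `Γ`-semimodule `Δ` for `Γ = ⟨p,q⟩`
(`p < q` coprime) admits a unique `p`-basis `{a_0, …, a_{p-1}}` with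
`Δ = ⋃ i, (a_i + pℕ)` and `a_i ≡ i q (mod p)`. -/
theorem exists_unique_p_basis (p q : ℕ) (hp : 0 < p) (hpq : p < q)
    (hcop : Nat.Coprime p q)
    (Γ : Set ℕ) (hΓ : Γ = {n : ℕ | ∃ a b : ℕ, n = a * p + b * q})
    (Δ : Set ℕ) (h0 : 0 ∈ Δ) (hmod : ∀ d ∈ Δ, ∀ g ∈ Γ, d + g ∈ Δ) :
    ∃! a : Fin p → ℕ,
      (Δ = ⋃ i : Fin p, {n : ℕ | ∃ k : ℕ, n = a i + p * k}) ∧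
      (∀ i : Fin p, a i % p = (i * q) % p) := by
  classical
  subst hΓ
  -- Δ is closed under adding multiples of p
  have hclose : ∀ d ∈ Δ, ∀ k : ℕ, d + p * k ∈ Δ := by
    intro d hd k
    have h : d + p * k = d + (k * p + 0 * q) := by ring
    rw [h]
    exact hmod d hd _ ⟨k, 0, rfl⟩
  -- each residue class i*q mod p meets Δ
  have hmem : ∀ i : Fin p, ∃ d, d ∈ Δ ∧ d % p = ((i : ℕ) * q) % p := by
    intro i
    refine ⟨(i : ℕ) * q, ?_, rfl⟩
    have := hmod 0 h0 ((i : ℕ) * q) ⟨0, i, by ring⟩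
    simpa using this
  set a : Fin p → ℕ := fun i => Nat.find (hmem i) with ha
  have haΔ : ∀ i, a i ∈ Δ := fun i => (Nat.find_spec (hmem i)).1
  have hamod : ∀ i, a i % p = ((i : ℕ) * q) % p := fun i => (Nat.find_spec (hmem i)).2
  have hmin : ∀ i : Fin p, ∀ d ∈ Δ, d % p = ((i : ℕ) * q) % p → a i ≤ d := by
    intro i d hd hdm
    exact Nat.find_min' (hmem i) ⟨hd, hdm⟩
  -- injectivity of i ↦ (i*q) % p
  have hinj : ∀ i j : Fin p, ((i : ℕ) * q) % p = ((j : ℕ) * q) % p → i = j := by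
    intro i j h
    have h1 : (i : ℕ) ≡ (j : ℕ) [MOD p] :=
      Nat.ModEq.cancel_right_of_coprime (by simpa [Nat.coprime_comm] using hcop) h
    have h2 : (i : ℕ) % p = (j : ℕ) % p := h1
    rw [Nat.mod_eq_of_lt i.isLt, Nat.mod_eq_of_lt j.isLt] at h2
    exact Fin.ext h2
  -- surjectivity onto residues
  have hsurj : ∀ r : ℕ, r < p → ∃ i : Fin p, ((i : ℕ) * q) % p = r := by
    intro r hr
    let f : Fin p → Fin p := fun i => ⟨((i : ℕ) * q) % p, Nat.mod_lt _ hp⟩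
    have hfinj : Function.Injective f := by
      intro i j hij
      exact hinj i j (Fin.val_inj.mpr hij)
    have hfsurj : Function.Surjective f := Finite.surjective_of_injective hfinj
    obtain ⟨i, hi⟩ := hfsurj ⟨r, hr⟩
    exact ⟨i, congrArg Fin.val hi⟩
  -- the key description lemma: a function b works iff b i is minimal in its class
  have hcover : Δ = ⋃ i : Fin p, {n : ℕ | ∃ k : ℕ, n = a i + p * k} := by
    ext d
    constructor
    · intro hd
      obtain ⟨i, hi⟩ := hsurj (d % p) (Nat.mod_lt _ hp)
      have hle : a i ≤ d := hmin i d hd hi.symm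
      have hmeq : a i ≡ d [MOD p] := by
        unfold Nat.ModEq
        rw [hamod i, hi]
      obtain ⟨k, hk⟩ := (Nat.modEq_iff_dvd' hle).mp hmeq
      refine Set.mem_iUnion.mpr ⟨i, ⟨k, ?_⟩⟩
      omega
    · intro hd
      obtain ⟨i, k, hk⟩ := Set.mem_iUnion.mp hd
      rw [hk]
      exact hclose _ (haΔ i) k
  refine ⟨a, ⟨hcover, hamod⟩, ?_⟩
  rintro b ⟨hb1, hb2⟩
  funext i
  have hbΔ : b i ∈ Δ := by
    rw [hb1]
    exact Set.mem_iUnion.mpr ⟨i, ⟨0, by ring⟩⟩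
  have h1 : a i ≤ b i := hmin i (b i) hbΔ (hb2 i)
  have h2 : b i ≤ a i := by
    have : a i ∈ Δ := haΔ i
    rw [hb1] at this
    obtain ⟨j, k, hk⟩ := Set.mem_iUnion.mp this
    have hmm : a i % p = b j % p := by rw [hk, Nat.add_mul_mod_self_left]
    have hji : j = i := by
      apply hinj
      rw [← hb2 j, ← hamod i]
      exact hmm.symm
    subst hji
    omega
  omega
end

section
/- Let p < q be coprime, Γ = ⟨p,q⟩, and let Δ be a 0-normalized Γ-semimodule with p-basis {a_0 = 0, a_1, ..., a_{p-1}} where a_i ≡ iq (mod p). Writing a_i = iq - α_i p with α_0 = 0, the integers α_i are non-negative and satisfy 0 ≤ α_1 ≤ α_2 ≤ ⋯ ≤ α_{p-1} < q. -/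
/-- If `{a_0 = 0, a_1, …, a_{p-1}}` is the `p`-basis of a 0-normalized
`Γ`-semimodule `Δ` for `Γ = ⟨p,q⟩`, and `a_i = i q - α_i p`, then the `α_i` are
non-negative and satisfy `0 ≤ α_1 ≤ ⋯ ≤ α_{p-1} < q`. -/
theorem alpha_monotone (p q : ℕ) (hp : 0 < p) (hpq : p < q)
    (hcop : Nat.Coprime p q)
    (Γ : Set ℕ) (hΓ : Γ = {n : ℕ | ∃ a b : ℕ, n = a * p + b * q})
    (Δ : Set ℕ) (h0 : 0 ∈ Δ) (hmod : ∀ d ∈ Δ, ∀ g ∈ Γ, d + g ∈ Δ)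
    (a : Fin p → ℕ)
    (hbasis : Δ = ⋃ i : Fin p, {n : ℕ | ∃ k : ℕ, n = a i + p * k})
    (hcong : ∀ i : Fin p, a i % p = (i * q) % p)
    (ha0 : a ⟨0, hp⟩ = 0)
    (α : Fin p → ℤ)
    (hα : ∀ i : Fin p, (a i : ℤ) = (i : ℕ) * q - α i * p) :
    (∀ i : Fin p, 0 ≤ α i) ∧
    (∀ i j : Fin p, i ≤ j → α i ≤ α j) ∧
    α ⟨p - 1, by omega⟩ < q := by
  have hq1 : Nat.gcd q p = 1 := Nat.Coprime.symm hcop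
  -- key: if n ∈ Δ and n ≡ i q mod p then a i ≤ n
  have key : ∀ n ∈ Δ, ∀ i : Fin p, n % p = (i * q) % p → a i ≤ n := by
    intro n hn i hni
    rw [hbasis] at hn
    obtain ⟨j, k, rfl⟩ : ∃ j : Fin p, ∃ k : ℕ, n = a j + p * k := by
      obtain ⟨j, hj⟩ := Set.mem_iUnion.mp hn
      exact ⟨j, hj⟩
    have hmodj : (a j + p * k) % p = (j * q) % p := by
      rw [Nat.add_mul_mod_self_left, hcong j]
    have hij : (j : ℕ) * q ≡ (i : ℕ) * q [MOD p] := by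
      unfold Nat.ModEq
      omega
    have hji : (j : ℕ) ≡ (i : ℕ) [MOD p] :=
      Nat.ModEq.cancel_right_of_coprime hcop hij
    have : j = i := by
      apply Fin.ext
      have := hji
      unfold Nat.ModEq at this
      rw [Nat.mod_eq_of_lt j.isLt, Nat.mod_eq_of_lt i.isLt] at this
      exact this
    subst this
    exact Nat.le_add_right _ _
  -- nonnegativity
  have hnonneg : ∀ i : Fin p, 0 ≤ α i := by
    intro i
    have hmem : (i : ℕ) * q ∈ Δ := by
      have := hmod 0 h0 ((i : ℕ) * q) (by rw [hΓ]; exact ⟨0, i, by ring⟩)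
      simpa using this
    have hle : a i ≤ (i : ℕ) * q := key _ hmem i rfl
    have hcast : (a i : ℤ) ≤ ((i : ℕ) : ℤ) * q := by exact_mod_cast hle
    rw [hα i] at hcast
    have hppos : (0:ℤ) < p := by exact_mod_cast hp
    have h0le : 0 * (p:ℤ) ≤ α i * p := by linarith
    exact le_of_mul_le_mul_right h0le hppos
  -- step
  have step : ∀ i : ℕ, ∀ hi : i < p, ∀ h : i + 1 < p, α ⟨i, hi⟩ ≤ α ⟨i + 1, h⟩ := by
    intro i hi h
    have hai : a ⟨i, hi⟩ ∈ Δ := by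
      rw [hbasis]
      exact Set.mem_iUnion.mpr ⟨⟨i, hi⟩, 0, by ring⟩
    have hmem : a ⟨i, hi⟩ + q ∈ Δ :=
      hmod _ hai q (by rw [hΓ]; exact ⟨0, 1, by ring⟩)
    have hmodeq : (a ⟨i, hi⟩ + q) % p = ((⟨i + 1, h⟩ : Fin p) : ℕ) * q % p := by
      have h1 := hcong ⟨i, hi⟩
      simp only [Fin.val_mk] at h1 ⊢
      conv_lhs => rw [Nat.add_mod, h1, ← Nat.add_mod]
      ring_nf
    have hle : a ⟨i + 1, h⟩ ≤ a ⟨i, hi⟩ + q := key _ hmem _ hmodeq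
    have hcast : (a ⟨i + 1, h⟩ : ℤ) ≤ (a ⟨i, hi⟩ : ℤ) + q := by exact_mod_cast hle
    rw [hα ⟨i + 1, h⟩, hα ⟨i, hi⟩] at hcast
    simp only [Fin.val_mk] at hcast
    push_cast at hcast
    have hppos : (0:ℤ) < p := by exact_mod_cast hp
    have hmul : α ⟨i, hi⟩ * p ≤ α ⟨i + 1, h⟩ * p := by linarith
    exact le_of_mul_le_mul_right hmul hppos
  -- monotone
  have mono : ∀ j : ℕ, ∀ hj : j < p, ∀ i : ℕ, ∀ hij : i ≤ j, α ⟨i, lt_of_le_of_lt hij hj⟩ ≤ α ⟨j, hj⟩ := by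
    intro j
    induction j with
    | zero =>
      intro hj i hi
      have : i = 0 := by omega
      subst this
      exact le_refl _
    | succ n ih =>
      intro hj i hi
      rcases Nat.lt_or_ge i (n + 1) with hlt | hge
      · exact le_trans (ih (by omega) i (by omega)) (step n (by omega) hj)
      · have : i = n + 1 := by omega
        subst this
        exact le_refl _
  refine ⟨hnonneg, ?_, ?_⟩
  · intro i j hij
    have := mono j.val j.isLt i.val hij
    simpa using this
  · have h1 := hα ⟨p - 1, by omega⟩
    have h2 : (0:ℤ) ≤ (a ⟨p - 1, by omega⟩ : ℤ) := Nat.cast_nonneg _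
    rw [h1] at h2
    simp only [Fin.val_mk] at h2
    have hc : ((p - 1 : ℕ) : ℤ) = (p : ℤ) - 1 := by omega
    have hppos : (0:ℤ) < p := by exact_mod_cast hp
    have hq0 : (0:ℤ) < q := by exact_mod_cast Nat.lt_of_lt_of_le hp (Nat.le_of_lt hpq)
    have h3 : α ⟨p - 1, by omega⟩ * p < q * p := by nlinarith [h2, hc, hq0, hppos]
    exact lt_of_mul_lt_mul_right h3 (le_of_lt hppos)
end

section
/- Let R ⊆ ℂ[[t]] be a subring of finite codimension, δ = dim_ℂ(ℂ[[t]]/R), and let I be an ideal of R with dim_ℂ(R/I) = r. Then (t^{r+2δ}) ∩ R ⊆ I ⊆ (t^r) ∩ R, where (t^a) denotes the ideal t^a ℂ[[t]] of ℂ[[t]]. -/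
/-!
Write `Γ(V)` (`orders V`) for the set of orders of the nonzero elements of a subspace
`V ⊆ k⟦X⟧`. The number of gaps `ℕ \ Γ(V)` is at most `codim V`, with equality once `V`
contains some `(X ^ K)`.
Let `J` be the ideal `I` viewed as a subspace of `k⟦X⟧`. It has codimension `δ + r`; it
contains some `(X ^ K)`, because multiplication, a linear map from the infinite-dimensional `R`
to the finite-dimensional `End (k⟦X⟧ ⧸ J)`, has a nonzero kernel; and `Γ(R) + Γ(J) ⊆ Γ(J)`.
If `n ∉ Γ(J)`, then for every `b ≤ n` either `b` is a gap of `R` or `n - b` is a gap of `J`,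
so `n + 1 ≤ δ + (δ + r)`. Hence `Γ(J)` contains every `n ≥ r + 2δ`, and eliminating leading
terms downwards from `X ^ K` gives `(X ^ (r + 2δ)) ⊆ J`. If `v ∈ Γ(J)`, every gap of `J` is
either below `v` or `v` plus a gap of `R`, so `δ + r ≤ v + δ`.
-/

open PowerSeries Finset

namespace Subalgebra

variable {k A : Type*} [Field k] [CommRing A] [Algebra k A]

lemma exists_ne_zero_forall_mul_mem (R : Subalgebra k A) (hR : ¬ FiniteDimensional k R)
    (V : Submodule k A) [FiniteDimensional k (A ⧸ V)]
    (hV : ∀ f ∈ R, ∀ g ∈ V, f * g ∈ V) :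
    ∃ q ∈ R, q ≠ 0 ∧ ∀ g, q * g ∈ V := by
  let φ : R →ₗ[k] Module.End k (A ⧸ V) := V.mapQLinear V ∘ₗ
    ((LinearMap.mul k A ∘ₗ R.val.toLinearMap).codRestrict (V.compatibleMaps V)
      fun f g hg => hV f f.2 g hg)
  have hker : LinearMap.ker φ ≠ ⊥ := fun h =>
    hR (Module.Finite.of_injective φ (LinearMap.ker_eq_bot.mp h))
  obtain ⟨q, hq, hq0⟩ := Submodule.exists_mem_ne_zero_of_ne_bot hker
  refine ⟨q, q.2, fun h => hq0 (Subtype.ext h), fun g => ?_⟩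
  have hqg : V.mkQ (q * g) = 0 := LinearMap.congr_fun (LinearMap.mem_ker.mp hq) (V.mkQ g)
  simpa using hqg

def mapIdeal (R : Subalgebra k A) (I : Ideal R) : Submodule k A :=
  (I.restrictScalars k).map R.val.toLinearMap

lemma mem_mapIdeal {R : Subalgebra k A} {I : Ideal R} {g : A} :
    g ∈ R.mapIdeal I ↔ ∃ f ∈ I, (f : A) = g := by
  simp [mapIdeal]

lemma mul_mem_mapIdeal {R : Subalgebra k A} {I : Ideal R} {f g : A} (hf : f ∈ R)
    (hg : g ∈ R.mapIdeal I) : f * g ∈ R.mapIdeal I := by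
  obtain ⟨g', hg', rfl⟩ := mem_mapIdeal.mp hg
  exact mem_mapIdeal.mpr ⟨⟨f, hf⟩ * g', I.mul_mem_left _ hg', rfl⟩

lemma mapIdeal_le (R : Subalgebra k A) (I : Ideal R) :
    R.mapIdeal I ≤ toSubmodule R := by
  rintro _ ⟨f, -, rfl⟩
  exact f.2

noncomputable def mapMkQEquivQuotient (R : Subalgebra k A) (I : Ideal R) :
    (toSubmodule R).map (R.mapIdeal I).mkQ ≃ₗ[k] R ⧸ I :=
  let φ := (R.mapIdeal I).mkQ ∘ₗ R.val.toLinearMap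
  have hker : LinearMap.ker φ = I.restrictScalars k := by
    ext f
    simp [φ, mem_mapIdeal]
  have hrange : LinearMap.range φ = (toSubmodule R).map (R.mapIdeal I).mkQ := by
    rw [LinearMap.range_comp]
    congr 1
    ext
    simp
  (LinearEquiv.ofEq _ _ hrange.symm).trans <| φ.quotKerEquivRange.symm.trans <|
    (Submodule.quotEquivOfEq _ _ hker).trans (Submodule.Quotient.restrictScalarsEquiv k I)

variable (R : Subalgebra k A) (I : Ideal R) [FiniteDimensional k (A ⧸ toSubmodule R)]
  [FiniteDimensional k (R ⧸ I)]

lemma finiteDimensional_quotient_mapIdeal : FiniteDimensional k (A ⧸ R.mapIdeal I) :=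
  have := Module.Finite.equiv (R.mapMkQEquivQuotient I).symm
  have := Module.Finite.equiv
    (Submodule.quotientQuotientEquivQuotient _ _ (R.mapIdeal_le I)).symm
  Module.Finite.of_submodule_quotient ((toSubmodule R).map (R.mapIdeal I).mkQ)

lemma finrank_quotient_mapIdeal :
    Module.finrank k (A ⧸ R.mapIdeal I) =
      Module.finrank k (A ⧸ toSubmodule R) + Module.finrank k (R ⧸ I) := by
  have := R.finiteDimensional_quotient_mapIdeal I
  rw [← Submodule.finrank_quotient_add_finrank ((toSubmodule R).map (R.mapIdeal I).mkQ),
    (R.mapMkQEquivQuotient I).finrank_eq,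
    (Submodule.quotientQuotientEquivQuotient _ _ (R.mapIdeal_le I)).finrank_eq]

lemma not_finiteDimensional_of_finiteDimensional_quotient
    (hA : ¬ FiniteDimensional k A) : ¬ FiniteDimensional k R := fun _ =>
  hA (Module.Finite.of_submodule_quotient (toSubmodule R))

end Subalgebra

namespace PowerSeries

lemma not_finiteDimensional (k : Type*) [Field k] : ¬ FiniteDimensional k k⟦X⟧ :=
  fun _ => Polynomial.not_finite (Module.Finite.of_injective
    (Polynomial.coeToPowerSeries.algHom k).toLinearMap (Polynomial.coe_injective k))

variable {k : Type*} [Field k] {U V W : Submodule k k⟦X⟧}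

def orders (V : Submodule k k⟦X⟧) : Set ℕ := {n | ∃ f ∈ V, f.order = n}

lemma order_toNat_mem_orders {f : k⟦X⟧} (hfV : f ∈ V) (hf : f ≠ 0) :
    f.order.toNat ∈ orders V :=
  ⟨f, hfV, (ENat.natCast_toNat (order_eq_top.not.mpr hf)).symm⟩

lemma add_mem_orders (hmul : ∀ f ∈ U, ∀ g ∈ V, f * g ∈ W) {a b : ℕ}
    (ha : a ∈ orders U) (hb : b ∈ orders V) : a + b ∈ orders W := by
  obtain ⟨f, hf, hfa⟩ := ha
  obtain ⟨g, hg, hgb⟩ := hb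
  exact ⟨f * g, hmul f hf g hg, by rw [order_mul, hfa, hgb]; push_cast; rfl⟩

lemma coeff_sum_smul_X_pow (s : Finset ℕ) (c : ℕ → k) (m : ℕ) :
    coeff m (∑ i ∈ s, c i • (X : k⟦X⟧) ^ i) = if m ∈ s then c m else 0 := by
  simp [map_sum, coeff_X_pow]

lemma forall_eq_zero_of_sum_smul_X_pow_mem {s : Finset ℕ} (hs : ∀ n ∈ s, n ∉ orders V)
    {c : ℕ → k} (h : ∑ i ∈ s, c i • (X : k⟦X⟧) ^ i ∈ V) : ∀ n ∈ s, c n = 0 := by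
  set f := ∑ i ∈ s, c i • (X : k⟦X⟧) ^ i
  by_contra! ⟨n, hn, hc⟩
  have hf : f ≠ 0 := by
    intro h0
    have hcoeff : coeff n f = _ := coeff_sum_smul_X_pow s c n
    rw [if_pos hn, h0, map_zero] at hcoeff
    exact hc hcoeff.symm
  have hlead := coeff_order hf
  rw [coeff_sum_smul_X_pow] at hlead
  split_ifs at hlead with hmem
  · exact hs _ hmem (order_toNat_mem_orders h hf)
  · exact hlead rfl

lemma linearIndepOn_mkQ_X_pow {s : Finset ℕ} (hs : ∀ n ∈ s, n ∉ orders V) :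
    LinearIndepOn k (fun n => V.mkQ ((X : k⟦X⟧) ^ n)) (s : Set ℕ) := by
  refine linearIndepOn_finset_iff.mpr fun c hc => forall_eq_zero_of_sum_smul_X_pow_mem hs ?_
  rw [← Submodule.Quotient.mk_eq_zero, ← Submodule.mkQ_apply, map_sum]
  simpa using hc

lemma card_le_finrank_of_forall_notMem_orders [FiniteDimensional k (k⟦X⟧ ⧸ V)]
    {s : Finset ℕ} (hs : ∀ n ∈ s, n ∉ orders V) :
    #s ≤ Module.finrank k (k⟦X⟧ ⧸ V) := by
  simpa using (linearIndepOn_mkQ_X_pow hs).fintype_card_le_finrank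

lemma X_pow_succ_dvd_sub_smul {f h : k⟦X⟧} {n : ℕ} (hf : f.order = n) (hh : X ^ n ∣ h) :
    X ^ (n + 1) ∣ h - (coeff n h / coeff n f) • f := by
  obtain ⟨hfn, hflow⟩ := order_eq_nat.mp hf
  rw [X_pow_dvd_iff] at hh ⊢
  intro m hm
  rcases (Nat.lt_succ_iff.mp hm).lt_or_eq with hlt | rfl
  · simp [hh m hlt, hflow m hlt]
  · simp [hfn]

lemma mem_of_X_pow_dvd_of_forall_mem_orders {N K : ℕ} (hK : ∀ h, X ^ K ∣ h → h ∈ V)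
    (hord : ∀ n, N ≤ n → n < K → n ∈ orders V) : ∀ h, X ^ N ∣ h → h ∈ V := by
  rcases le_total K N with hKN | hNK
  · exact fun h hh => hK h ((pow_dvd_pow X hKN).trans hh)
  induction hNK using Nat.decreasingInduction with
  | self => exact hK
  | of_succ n hn ih =>
    intro h hh
    obtain ⟨f, hfV, hf⟩ := hord n le_rfl hn
    have hrest := ih (fun m hm hmK => hord m (by omega) hmK) _ (X_pow_succ_dvd_sub_smul hf hh)
    simpa using V.add_mem hrest (V.smul_mem (coeff n h / coeff n f) hfV)

lemma mem_of_X_pow_order_dvd {q : k⟦X⟧} (hq : q ≠ 0) (hqV : ∀ g, q * g ∈ V) :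
    ∀ h, X ^ q.order.toNat ∣ h → h ∈ V := by
  rintro h ⟨g, rfl⟩
  obtain ⟨u, hu⟩ := isUnit_divided_by_X_pow_order hq
  have hfactor : X ^ q.order.toNat * g = q * (((u⁻¹ : k⟦X⟧ˣ) : k⟦X⟧) * g) := by
    conv_rhs => rw [← X_pow_order_mul_divXPowOrder (f := q), ← hu, mul_assoc,
      Units.mul_inv_cancel_left]
  rw [hfactor]
  exact hqV _

open Classical in
noncomputable def gapsBelow (V : Submodule k k⟦X⟧) (K : ℕ) : Finset ℕ :=
  {n ∈ range K | n ∉ orders V}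

@[simp]
lemma mem_gapsBelow {K n : ℕ} : n ∈ gapsBelow V K ↔ n < K ∧ n ∉ orders V := by
  simp [gapsBelow]

lemma card_gapsBelow_le_finrank (V : Submodule k k⟦X⟧) [FiniteDimensional k (k⟦X⟧ ⧸ V)]
    (K : ℕ) : #(gapsBelow V K) ≤ Module.finrank k (k⟦X⟧ ⧸ V) :=
  card_le_finrank_of_forall_notMem_orders fun _ hn => (mem_gapsBelow.mp hn).2

lemma finrank_quotient_le_card_gapsBelow {K : ℕ} (hK : ∀ h, X ^ K ∣ h → h ∈ V) :
    Module.finrank k (k⟦X⟧ ⧸ V) ≤ #(gapsBelow V K) := by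
  set W := V ⊔ Submodule.span k (Set.range fun n : gapsBelow V K => (X : k⟦X⟧) ^ (n : ℕ))
  have hW : ∀ h, X ^ 0 ∣ h → h ∈ W := by
    refine mem_of_X_pow_dvd_of_forall_mem_orders
      (fun h hh => Submodule.mem_sup_left (hK h hh)) fun n _ hnK => ?_
    by_cases hn : n ∈ orders V
    · obtain ⟨f, hfV, hf⟩ := hn
      exact ⟨f, Submodule.mem_sup_left hfV, hf⟩
    · refine ⟨X ^ n, Submodule.mem_sup_right (Submodule.subset_span ?_), order_X_pow n⟩
      exact ⟨⟨n, mem_gapsBelow.mpr ⟨hnK, hn⟩⟩, rfl⟩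
  have hspan : Submodule.span k
      (Set.range fun n : gapsBelow V K => V.mkQ ((X : k⟦X⟧) ^ (n : ℕ))) = ⊤ := by
    rw [Set.range_comp' V.mkQ, ← Submodule.map_span, Submodule.map_mkQ_eq_top, eq_top_iff]
    exact fun h _ => hW h (by simp)
  simpa using finrank_le_of_span_eq_top hspan

lemma gapsBelow_subset_range_union (hmul : ∀ f ∈ W, ∀ g ∈ V, f * g ∈ V) {v : ℕ}
    (hv : v ∈ orders V) (K : ℕ) :
    gapsBelow V K ⊆ range v ∪ (gapsBelow W K).map (addRightEmbedding v) := by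
  intro n hn
  obtain ⟨hnK, hnV⟩ := mem_gapsBelow.mp hn
  rcases lt_or_ge n v with hlt | hle
  · exact mem_union_left _ (mem_range.mpr hlt)
  refine mem_union_right _
    (mem_map.mpr ⟨n - v, mem_gapsBelow.mpr ⟨by omega, fun hW => hnV ?_⟩, ?_⟩)
  · exact Nat.sub_add_cancel hle ▸ add_mem_orders hmul hW hv
  · simp [Nat.sub_add_cancel hle]

lemma range_subset_gapsBelow_union (hmul : ∀ f ∈ W, ∀ g ∈ V, f * g ∈ V) {n : ℕ}
    (hn : n ∉ orders V) :
    range (n + 1) ⊆ gapsBelow W (n + 1) ∪ (gapsBelow V (n + 1)).image (n - ·) := by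
  intro b hb
  have hbn : b ≤ n := Nat.lt_succ_iff.mp (mem_range.mp hb)
  by_cases hbW : b ∈ orders W
  · refine mem_union_right _
      (mem_image.mpr ⟨n - b, mem_gapsBelow.mpr ⟨by omega, fun hV => hn ?_⟩, by omega⟩)
    exact Nat.add_sub_cancel' hbn ▸ add_mem_orders hmul hbW hV
  · exact mem_union_left _ (mem_gapsBelow.mpr ⟨mem_range.mp hb, hbW⟩)

lemma finrank_quotient_le_of_mem_orders (hmul : ∀ f ∈ W, ∀ g ∈ V, f * g ∈ V)
    [FiniteDimensional k (k⟦X⟧ ⧸ W)] {K : ℕ} (hK : ∀ h, X ^ K ∣ h → h ∈ V) {v : ℕ}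
    (hv : v ∈ orders V) :
    Module.finrank k (k⟦X⟧ ⧸ V) ≤ v + Module.finrank k (k⟦X⟧ ⧸ W) :=
  calc Module.finrank k (k⟦X⟧ ⧸ V)
    _ ≤ #(gapsBelow V K) := finrank_quotient_le_card_gapsBelow hK
    _ ≤ #(range v ∪ (gapsBelow W K).map (addRightEmbedding v)) :=
      card_le_card (gapsBelow_subset_range_union hmul hv K)
    _ ≤ v + #(gapsBelow W K) := (card_union_le _ _).trans (by simp)
    _ ≤ v + Module.finrank k (k⟦X⟧ ⧸ W) := by grw [card_gapsBelow_le_finrank W K]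

lemma mem_orders_of_finrank_add_le (hmul : ∀ f ∈ W, ∀ g ∈ V, f * g ∈ V)
    [FiniteDimensional k (k⟦X⟧ ⧸ V)] [FiniteDimensional k (k⟦X⟧ ⧸ W)] {n : ℕ}
    (hn : Module.finrank k (k⟦X⟧ ⧸ W) + Module.finrank k (k⟦X⟧ ⧸ V) ≤ n) :
    n ∈ orders V := by
  by_contra hnV
  have hcard : n + 1 ≤ Module.finrank k (k⟦X⟧ ⧸ W) + Module.finrank k (k⟦X⟧ ⧸ V) :=
    calc n + 1
      _ = #(range (n + 1)) := (card_range _).symm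
      _ ≤ #(gapsBelow W (n + 1) ∪ (gapsBelow V (n + 1)).image (n - ·)) :=
        card_le_card (range_subset_gapsBelow_union hmul hnV)
      _ ≤ #(gapsBelow W (n + 1)) + #(gapsBelow V (n + 1)) :=
        (card_union_le _ _).trans (Nat.add_le_add_left card_image_le _)
      _ ≤ _ := add_le_add (card_gapsBelow_le_finrank W _) (card_gapsBelow_le_finrank V _)
  omega

end PowerSeries

/-- For `R ⊆ ℂ[[t]]` of finite codimension `δ` and an ideal `I` of `R`
with `dim_ℂ(R/I) = r`, one has `(t^{r+2δ}) ∩ R ⊆ I ⊆ (t^r) ∩ R`. -/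
theorem ideal_sandwich
    (R : Subalgebra ℂ (PowerSeries ℂ))
    (δ : ℕ)
    (hfin : FiniteDimensional ℂ (PowerSeries ℂ ⧸ Subalgebra.toSubmodule R))
    (hδ : Module.finrank ℂ (PowerSeries ℂ ⧸ Subalgebra.toSubmodule R) = δ)
    (I : Ideal R) (r : ℕ)
    (hrfin : FiniteDimensional ℂ (R ⧸ I))
    (hr : Module.finrank ℂ (R ⧸ I) = r) :
    (∀ f : R, (X : PowerSeries ℂ) ^ (r + 2 * δ) ∣ (f : PowerSeries ℂ) → f ∈ I) ∧
    (∀ f : R, f ∈ I → (X : PowerSeries ℂ) ^ r ∣ (f : PowerSeries ℂ)) := by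
  set J := R.mapIdeal I
  have : FiniteDimensional ℂ (PowerSeries ℂ ⧸ J) := R.finiteDimensional_quotient_mapIdeal I
  have hJrank : Module.finrank ℂ (PowerSeries ℂ ⧸ J) = δ + r := by
    rw [R.finrank_quotient_mapIdeal I, hδ, hr]
  have hmul : ∀ f ∈ Subalgebra.toSubmodule R, ∀ g ∈ J, f * g ∈ J :=
    fun _ hf _ hg => R.mul_mem_mapIdeal hf hg
  obtain ⟨q, -, hq0, hqJ⟩ := R.exists_ne_zero_forall_mul_mem
    (R.not_finiteDimensional_of_finiteDimensional_quotient (not_finiteDimensional ℂ)) J hmul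
  have hK := mem_of_X_pow_order_dvd hq0 hqJ
  constructor
  · intro f hf
    have hfJ : (f : PowerSeries ℂ) ∈ J := mem_of_X_pow_dvd_of_forall_mem_orders hK
      (fun n hn _ => mem_orders_of_finrank_add_le hmul (by rw [hJrank, hδ]; omega)) _ hf
    obtain ⟨g, hg, hgf⟩ := Subalgebra.mem_mapIdeal.mp hfJ
    exact Subtype.ext hgf ▸ hg
  · intro f hf
    by_cases hf0 : (f : PowerSeries ℂ) = 0
    · simp [hf0]
    have hv := order_toNat_mem_orders (Subalgebra.mem_mapIdeal.mpr ⟨f, hf, rfl⟩) hf0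
    have hrv := finrank_quotient_le_of_mem_orders hmul hK hv
    rw [hJrank, hδ] at hrv
    exact (pow_dvd_pow X (by omega)).trans X_pow_order_dvd
end

section
/- Let R ⊆ ℂ[[t]] be a subring of finite codimension δ = dim_ℂ(ℂ[[t]]/R), and let I be an ideal of R with dim_ℂ(R/I) = r such that t^r ℂ[[t]] ⊇ I (so t^{-r} I ⊆ ℂ[[t]]). Then dim_ℂ(ℂ[[t]]/t^{-r}I) = δ. -/
/-!
Put `S = ℂ⟦X⟧` and view `I` as a subspace of `S`. The chains `I ⊆ R ⊆ S` and `I ⊆ X ^ r S ⊆ S`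
compute `dim (S / I)` in two ways: `δ + r = r + dim (X ^ r S / I)`. Multiplication by `X ^ r` maps
`t^{-r} I` onto `I`, so `S / t^{-r} I ≃ X ^ r S / I`, and cancelling `r` gives the claim.
-/

open PowerSeries

section QuotientRank

universe u

variable {K : Type*} [DivisionRing K] {V W : Type u} [AddCommGroup V] [Module K V]
  [AddCommGroup W] [Module K W]

theorem Submodule.rank_quotient_add_rank_map_mkQ {p q : Submodule K V} (hpq : p ≤ q) :
    Module.rank K (V ⧸ q) + Module.rank K (q.map p.mkQ) = Module.rank K (V ⧸ p) := by
  rw [← (Submodule.quotientQuotientEquivQuotient p q hpq).rank_eq,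
    rank_quotient_add_rank_of_divisionRing]

noncomputable def LinearMap.quotientComapEquivMapRange (f : W →ₗ[K] V) (p : Submodule K V) :
    (W ⧸ p.comap f) ≃ₗ[K] (LinearMap.range f).map p.mkQ :=
  (Submodule.quotEquivOfEq _ _ (by rw [LinearMap.ker_comp, Submodule.ker_mkQ])).trans <|
    (p.mkQ ∘ₗ f).quotKerEquivRange.trans (LinearEquiv.ofEq _ _ (LinearMap.range_comp f p.mkQ))

theorem LinearMap.rank_quotient_range_add_rank_quotient_comap (f : W →ₗ[K] V) {p : Submodule K V}
    (hp : p ≤ LinearMap.range f) :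
    Module.rank K (V ⧸ LinearMap.range f) + Module.rank K (W ⧸ p.comap f) =
      Module.rank K (V ⧸ p) := by
  rw [(f.quotientComapEquivMapRange p).rank_eq]
  exact Submodule.rank_quotient_add_rank_map_mkQ hp

end QuotientRank

theorem PowerSeries.rank_quotient_range_mulLeft_X_pow (K : Type*) [Field K] (n : ℕ) :
    Module.rank K (K⟦X⟧ ⧸ LinearMap.range (LinearMap.mulLeft K ((X : K⟦X⟧) ^ n))) = n := by
  let lowCoeffs : K⟦X⟧ →ₗ[K] Fin n → K := LinearMap.pi fun i : Fin n ↦ coeff (i : ℕ)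
  have surjective : Function.Surjective lowCoeffs := fun v ↦
    ⟨mk fun m ↦ if h : m < n then v ⟨m, h⟩ else 0, by ext i; simp [lowCoeffs, coeff_mk, i.2]⟩
  have ker_eq : LinearMap.ker lowCoeffs = LinearMap.range (LinearMap.mulLeft K (X ^ n)) := by
    ext f
    simp only [LinearMap.mem_ker, LinearMap.mem_range, LinearMap.mulLeft_apply]
    refine ⟨fun h ↦ ?_, ?_⟩
    · obtain ⟨g, rfl⟩ : (X : K⟦X⟧) ^ n ∣ f :=
        X_pow_dvd_iff.mpr fun m hm ↦ by simpa [lowCoeffs] using congrFun h ⟨m, hm⟩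
      exact ⟨g, rfl⟩
    · rintro ⟨g, rfl⟩
      ext i
      simp [lowCoeffs, coeff_X_pow_mul', Nat.not_le.mpr i.2]
  rw [← ker_eq, (lowCoeffs.quotKerEquivOfSurjective surjective).rank_eq, rank_fin_fun]

theorem codim_of_shifted_ideal_general
    (R : Subalgebra ℂ (PowerSeries ℂ))
    (δ : ℕ)
    (hδ : Module.finrank ℂ (PowerSeries ℂ ⧸ Subalgebra.toSubmodule R) = δ)
    (I : Ideal R) (r : ℕ)
    (hrfin : FiniteDimensional ℂ (R ⧸ I))
    (hr : Module.finrank ℂ (R ⧸ I) = r)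
    (hsub : ∀ f : R, f ∈ I → (X : PowerSeries ℂ) ^ r ∣ (f : PowerSeries ℂ)) :
    Module.finrank ℂ
      (PowerSeries ℂ ⧸ Submodule.span ℂ
        {g : PowerSeries ℂ | ∃ f : R, f ∈ I ∧ (f : PowerSeries ℂ) = X ^ r * g}) = δ := by
  let ι := R.val.toLinearMap
  let μ := LinearMap.mulLeft ℂ ((X : ℂ⟦X⟧) ^ r)
  let p := (I.restrictScalars ℂ).map ι
  have hpR : p ≤ LinearMap.range ι := LinearMap.map_le_range
  have hpμ : p ≤ LinearMap.range μ := by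
    rintro _ ⟨f, hf, rfl⟩
    obtain ⟨g, hg⟩ := hsub f hf
    exact ⟨g, hg.symm⟩
  have hRange : LinearMap.range ι = Subalgebra.toSubmodule R := by
    ext x; simp [ι]
  have hComap : p.comap ι = I.restrictScalars ℂ :=
    Submodule.comap_map_eq_of_injective Subtype.val_injective _
  have hShift : Submodule.span ℂ {g : ℂ⟦X⟧ | ∃ f : R, f ∈ I ∧ (f : ℂ⟦X⟧) = X ^ r * g} =
      p.comap μ :=
    -- the spanning set is already the carrier of `p.comap μ`
    (p.comap μ).span_eq
  have viaR := ι.rank_quotient_range_add_rank_quotient_comap hpR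
  have viaXPow := μ.rank_quotient_range_add_rank_quotient_comap hpμ
  rw [hRange, hComap, (Submodule.Quotient.restrictScalarsEquiv ℂ I).rank_eq,
    ← Module.finrank_eq_rank ℂ (R ⧸ I), hr] at viaR
  rw [PowerSeries.rank_quotient_range_mulLeft_X_pow, ← hShift, ← viaR, add_comm,
    Cardinal.add_right_inj_of_lt_aleph0 Cardinal.natCast_lt_aleph0] at viaXPow
  rw [← hδ]
  exact congrArg Cardinal.toNat viaXPow

/-- For `R ⊆ ℂ[[t]]` of finite codimension `δ` and an ideal `I` of `R`
with `dim_ℂ(R/I) = r` and `I ⊆ t^r ℂ[[t]]`, the subspace `t^{-r} I ⊆ ℂ[[t]]` has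
codimension `δ`: `dim_ℂ(ℂ[[t]] / t^{-r} I) = δ`. -/
theorem codim_of_shifted_ideal
    (R : Subalgebra ℂ (PowerSeries ℂ))
    (δ : ℕ)
    (hfin : FiniteDimensional ℂ (PowerSeries ℂ ⧸ Subalgebra.toSubmodule R))
    (hδ : Module.finrank ℂ (PowerSeries ℂ ⧸ Subalgebra.toSubmodule R) = δ)
    (I : Ideal R) (r : ℕ)
    (hrfin : FiniteDimensional ℂ (R ⧸ I))
    (hr : Module.finrank ℂ (R ⧸ I) = r)
    (hsub : ∀ f : R, f ∈ I → (X : PowerSeries ℂ) ^ r ∣ (f : PowerSeries ℂ)) :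
    Module.finrank ℂ
      (PowerSeries ℂ ⧸ Submodule.span ℂ
        {g : PowerSeries ℂ | ∃ f : R, f ∈ I ∧ (f : PowerSeries ℂ) = X ^ r * g}) = δ :=
  codim_of_shifted_ideal_general R δ hδ I r hrfin hr hsub
end
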